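/- Key inequality (28)–(30, eps-lower) in the proof of Theorem 2. Under the hypotheses of Theorem 2 (optimal congruent potentials {ψₙ*}; ψₙ† differentiable convex; ψ̄ₙ‡ β-strongly convex and B-smooth differentiable convex with 0 < β ≤ B < ∞ and differentiable conjugates ψₙ‡ with (1/β)-Lipschitz gradients and mutually inverse gradients; λ > B/(2β²); τ ≥ 1 with P̄ ≤ τ·P̂ setwise), let Δ = M − Σₙ αₙ ∫ ψₙ* dPₙ where M is the regularized objective. Then Δ ≥ Σₙ αₙ (λ − B/(2β²)) · ∫ ‖∇ψ̄ₙ‡(∇ψₙ†(x)) − x‖² dPₙ(x) + (β/2) · Σₙ αₙ ∫ ‖∇ψₙ*(x) − ∇ψₙ‡(x)‖² dPₙ(x); in particular Δ ≥ 0. -/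

import Mathlib

/-!
For each `n`, strong convexity and smoothness of `ψ̄ₙ‡` squeeze the Fenchel–Young gap
`ψ̄ₙ‡(y) + ψₙ‡(x) - ⟪y, x⟫` between `(β/2)‖y - ∇ψₙ‡(x)‖²` and `(B/2)‖y - ∇ψₙ‡(x)‖²`.
At `y = ∇ψₙ*(x)` the Fenchel–Young inequality for `ψₙ*` is an equality, and at `y = ∇ψₙ†(x)`
the `(1/β)`-Lipschitz inverse gradient `∇ψₙ‡` turns the distance into
`‖∇ψ̄ₙ‡(∇ψₙ†(x)) - x‖ / β`. Comparing the two points bounds the `n`-th data term of `M` from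
below by `∫ ψₙ* dPₙ + ∫ (ψ̄ₙ* - ψ̄ₙ‡) dP̄` plus the two quadratic terms. After weighting by `αₙ`,
congruence `Σ αₙ ψ̄ₙ* = ‖·‖²/2` turns the middle terms into `-∫ (Σ αₙ ψ̄ₙ‡ - ‖·‖²/2) dP̄`,
which the penalty `τ ∫ [·]₊ dP̂` dominates since `P̄ ≤ τ P̂`.
-/

open MeasureTheory RealInnerProductSpace Set

section FirstOrder

variable {E : Type*} [NormedAddCommGroup E]

theorem ConvexOn.add_fderiv_sub_le [NormedSpace ℝ E] {f : E → ℝ} {f' : E →L[ℝ] ℝ} {x : E}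
    (hf : ConvexOn ℝ univ f) (hx : HasFDerivAt f f' x) (y : E) : f x + f' (y - x) ≤ f y := by
  have hline : HasDerivAt (f ∘ AffineMap.lineMap (k := ℝ) x y) (f' (y - x)) 0 :=
    hx.comp_hasDerivAt_of_eq (0 : ℝ) AffineMap.hasDerivAt_lineMap (by simp)
  have := (hf.comp_affineMap (AffineMap.lineMap x y)).le_slope_of_hasDerivAt
    (mem_univ 0) (mem_univ 1) zero_lt_one hline
  simp only [slope_def_field, Function.comp_apply, AffineMap.lineMap_apply_one,
    AffineMap.lineMap_apply_zero, sub_zero, div_one] at this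
  linarith

variable [InnerProductSpace ℝ E] [CompleteSpace E] {f : E → ℝ} {x : E}

theorem StrongConvexOn.add_inner_gradient_add_sq_le {m : ℝ} (hf : StrongConvexOn univ m f)
    (hx : DifferentiableAt ℝ f x) (y : E) :
    f x + ⟪gradient f x, y - x⟫ + m / 2 * ‖y - x‖ ^ 2 ≤ f y := by
  have hsq := ((hasStrictFDerivAt_norm_sq x).hasFDerivAt.const_mul (m / 2))
  have := (strongConvexOn_iff_convex.1 hf).add_fderiv_sub_le (hx.hasFDerivAt.sub hsq) y
  simp only [sub_apply, smul_apply, innerSL_apply_apply, smul_eq_mul, ← inner_gradient_left,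
    nsmul_eq_mul, Nat.cast_ofNat, inner_sub_right, real_inner_self_eq_norm_sq] at this
  rw [norm_sub_sq_real, inner_sub_right, real_inner_comm x y]
  linarith

theorem ConvexOn.isGreatest_inner_gradient_sub (hf : ConvexOn ℝ univ f)
    (hx : DifferentiableAt ℝ f x) :
    IsGreatest (range fun y => ⟪y, gradient f x⟫ - f y) (⟪x, gradient f x⟫ - f x) := by
  refine ⟨⟨x, rfl⟩, ?_⟩
  rintro _ ⟨y, rfl⟩
  have := (strongConvexOn_zero.2 hf).add_inner_gradient_add_sq_le hx y
  rw [inner_sub_right, zero_div, zero_mul, add_zero] at this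
  dsimp only
  rw [real_inner_comm (gradient f x) y, real_inner_comm (gradient f x) x]
  linarith

theorem le_add_inner_gradient_add_sq {B : ℝ} (hf : Differentiable ℝ f)
    (hlip : ∀ x y, ‖gradient f x - gradient f y‖ ≤ B * ‖x - y‖) (x y : E) :
    f y ≤ f x + ⟪gradient f x, y - x⟫ + B / 2 * ‖y - x‖ ^ 2 := by
  set v := y - x
  let φ : ℝ → ℝ := fun t => f (x + t • v) - t * ⟪gradient f x, v⟫ - B / 2 * t ^ 2 * ‖v‖ ^ 2
  have hφ : ∀ t, HasDerivAt φ (⟪gradient f (x + t • v) - gradient f x, v⟫ - B * t * ‖v‖ ^ 2) t := by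
    intro t
    have hline : HasDerivAt (fun t : ℝ => x + t • v) v t := by
      simpa using ((hasDerivAt_id t).smul_const v).const_add x
    have := (((hf _).hasFDerivAt.comp_hasDerivAt t hline).sub
      ((hasDerivAt_id t).mul_const ⟪gradient f x, v⟫)).sub
      (((hasDerivAt_pow 2 t).const_mul (B / 2)).mul_const (‖v‖ ^ 2))
    refine this.congr_deriv ?_
    rw [← inner_gradient_left, inner_sub_left]
    ring
  have hanti : AntitoneOn φ (Icc 0 1) := by
    refine antitoneOn_of_deriv_nonpos (convex_Icc 0 1)
      (fun t _ => (hφ t).continuousAt.continuousWithinAt)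
      (fun t _ => (hφ t).differentiableAt.differentiableWithinAt) fun t ht => ?_
    rw [interior_Icc] at ht
    rw [(hφ t).deriv, sub_nonpos]
    calc ⟪gradient f (x + t • v) - gradient f x, v⟫
        ≤ ‖gradient f (x + t • v) - gradient f x‖ * ‖v‖ := real_inner_le_norm _ _
      _ ≤ B * ‖t • v‖ * ‖v‖ := by
          gcongr
          simpa using hlip (x + t • v) x
      _ = B * t * ‖v‖ ^ 2 := by rw [norm_smul, Real.norm_of_nonneg ht.1.le]; ring
  have := hanti (left_mem_Icc.2 zero_le_one) (right_mem_Icc.2 zero_le_one) zero_le_one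
  simp only [φ, one_smul, zero_smul, add_zero, add_sub_cancel, v] at this
  linarith

end FirstOrder

section Conjugate

variable {E : Type*} [NormedAddCommGroup E] [InnerProductSpace ℝ E] [CompleteSpace E]
  {g : E → ℝ} {x x₀ : E} {c : ℝ}

theorem IsLUB.eq_inner_sub_of_gradient_eq (hc : IsLUB (range fun y => ⟪y, x⟫ - g y) c)
    (hg : ConvexOn ℝ univ g) (hx₀ : DifferentiableAt ℝ g x₀) (hgx₀ : gradient g x₀ = x) :
    c = ⟪x₀, x⟫ - g x₀ := by
  subst hgx₀
  exact hc.unique (hg.isGreatest_inner_gradient_sub hx₀).isLUB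

theorem IsLUB.inner_sub_add_sq_le {β : ℝ} (hc : IsLUB (range fun y => ⟪y, x⟫ - g y) c)
    (hg : StrongConvexOn univ β g) (hx₀ : DifferentiableAt ℝ g x₀) (hgx₀ : gradient g x₀ = x)
    (y : E) : ⟪y, x⟫ - g y + β / 2 * ‖y - x₀‖ ^ 2 ≤ c := by
  have := hg.add_inner_gradient_add_sq_le hx₀ y
  rw [hgx₀, inner_sub_right, real_inner_comm y x, real_inner_comm x₀ x] at this
  have hx₀c : ⟪x₀, x⟫ - g x₀ ≤ c := hc.1 ⟨x₀, rfl⟩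
  linarith

theorem IsLUB.le_inner_sub_add_sq {B : ℝ} (hc : IsLUB (range fun y => ⟪y, x⟫ - g y) c)
    (hg : ConvexOn ℝ univ g) (hgd : Differentiable ℝ g)
    (hlip : ∀ x y, ‖gradient g x - gradient g y‖ ≤ B * ‖x - y‖) (hgx₀ : gradient g x₀ = x)
    (y : E) : c ≤ ⟪y, x⟫ - g y + B / 2 * ‖y - x₀‖ ^ 2 := by
  have := le_add_inner_gradient_add_sq hgd hlip x₀ y
  rw [hgx₀, inner_sub_right, real_inner_comm y x, real_inner_comm x₀ x] at this
  rw [hc.eq_inner_sub_of_gradient_eq hg (hgd x₀) hgx₀]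
  linarith

variable {φ φc gc : E → ℝ} {β B : ℝ} {t : E}

theorem le_conj_sub_conj
    (hφ : ConvexOn ℝ univ φ) (hφx : DifferentiableAt ℝ φ x)
    (hφc : IsLUB (range fun z => ⟪z, gradient φ x⟫ - φ z) (φc (gradient φ x)))
    (hg : ConvexOn ℝ univ g) (hgd : Differentiable ℝ g)
    (hsmooth : ∀ x y, ‖gradient g x - gradient g y‖ ≤ B * ‖x - y‖)
    (hgc : IsLUB (range fun y => ⟪y, x⟫ - g y) (gc x)) (hinv : gradient g (gradient gc x) = x) :
    ⟪x, t⟫ - g t - φ x - B / 2 * ‖gradient φ x - gradient gc x‖ ^ 2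
      ≤ φc (gradient φ x) - g (gradient φ x) := by
  have hφ_eq := hφc.eq_inner_sub_of_gradient_eq hφ hφx rfl
  have ht : ⟪t, x⟫ - g t ≤ gc x := hgc.1 ⟨t, rfl⟩
  have hs := hgc.le_inner_sub_add_sq hg hgd hsmooth hinv (gradient φ x)
  rw [real_inner_comm x (gradient φ x)] at hs
  rw [real_inner_comm x t] at ht
  linarith

theorem conj_sub_conj_add_sq_le (hB : 0 ≤ B)
    (hφ : ConvexOn ℝ univ φ) (hφx : DifferentiableAt ℝ φ x)
    (hφc : IsLUB (range fun z => ⟪z, gradient φ x⟫ - φ z) (φc (gradient φ x)))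
    (hsc : StrongConvexOn univ β g) (hg : ConvexOn ℝ univ g) (hgd : Differentiable ℝ g)
    (hsmooth : ∀ x y, ‖gradient g x - gradient g y‖ ≤ B * ‖x - y‖)
    (hgc : IsLUB (range fun y => ⟪y, x⟫ - g y) (gc x))
    (hlip : ∀ x y, ‖gradient gc x - gradient gc y‖ ≤ 1 / β * ‖x - y‖)
    (hinv : gradient g (gradient gc x) = x) (hinv' : gradient gc (gradient g t) = t) :
    φc (gradient φ x) - g (gradient φ x) + β / 2 * ‖gradient φ x - gradient gc x‖ ^ 2
      ≤ ⟪x, t⟫ - g t - φ x + B / (2 * β ^ 2) * ‖gradient g t - x‖ ^ 2 := by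
  have hφ_eq := hφc.eq_inner_sub_of_gradient_eq hφ hφx rfl
  have hs := hgc.inner_sub_add_sq_le hsc (hgd _) hinv (gradient φ x)
  have ht := hgc.le_inner_sub_add_sq hg hgd hsmooth hinv t
  have hdist : ‖t - gradient gc x‖ ≤ 1 / β * ‖gradient g t - x‖ := by
    simpa only [hinv'] using hlip (gradient g t) x
  have hdist_sq : B / 2 * ‖t - gradient gc x‖ ^ 2 ≤ B / (2 * β ^ 2) * ‖gradient g t - x‖ ^ 2 :=
    calc B / 2 * ‖t - gradient gc x‖ ^ 2 ≤ B / 2 * (1 / β * ‖gradient g t - x‖) ^ 2 := by gcongr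
      _ = B / (2 * β ^ 2) * ‖gradient g t - x‖ ^ 2 := by ring
  rw [real_inner_comm x (gradient φ x)] at hs
  rw [real_inner_comm x t] at ht
  linarith

end Conjugate

section Integral

variable {E : Type*} [NormedAddCommGroup E] [InnerProductSpace ℝ E] [CompleteSpace E]
  [MeasurableSpace E] [BorelSpace E]

theorem measurable_gradient (f : E → ℝ) : Measurable (gradient f) :=
  (InnerProductSpace.toDual ℝ E).symm.continuous.measurable.comp (measurable_fderiv ℝ f)

theorem integrable_map_and_integral_map_conj_sub_conj_le {φ φc g gc : E → ℝ} {β B : ℝ}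
    (μ : Measure E) (t : E → E) (hB : 0 ≤ B)
    (hφ : ConvexOn ℝ univ φ) (hφd : Differentiable ℝ φ)
    (hφc : ∀ y, IsLUB (range fun z => ⟪z, y⟫ - φ z) (φc y)) (hφc_cont : Continuous φc)
    (hsc : StrongConvexOn univ β g) (hg : ConvexOn ℝ univ g) (hgd : Differentiable ℝ g)
    (hsmooth : ∀ x y, ‖gradient g x - gradient g y‖ ≤ B * ‖x - y‖)
    (hgc : ∀ x, IsLUB (range fun y => ⟪y, x⟫ - g y) (gc x))
    (hlip : ∀ x y, ‖gradient gc x - gradient gc y‖ ≤ 1 / β * ‖x - y‖)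
    (hinv : ∀ x, gradient g (gradient gc x) = x) (hinv' : ∀ y, gradient gc (gradient g y) = y)
    (hT : Integrable (fun x => ⟪x, t x⟫ - g (t x)) μ)
    (hR : Integrable (fun x => ‖gradient g (t x) - x‖ ^ 2) μ) (hφi : Integrable φ μ)
    (hQ : Integrable (fun x => ‖gradient φ x - gradient gc x‖ ^ 2) μ) :
    Integrable (fun y => φc y - g y) (μ.map (gradient φ)) ∧
      ∫ y, φc y - g y ∂μ.map (gradient φ)
        + β / 2 * ∫ x, ‖gradient φ x - gradient gc x‖ ^ 2 ∂μ
        - B / (2 * β ^ 2) * ∫ x, ‖gradient g (t x) - x‖ ^ 2 ∂μ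
      ≤ ∫ x, ⟪x, t x⟫ - g (t x) ∂μ - ∫ x, φ x ∂μ := by
  have hG : AEStronglyMeasurable (fun y => φc y - g y) (μ.map (gradient φ)) :=
    (hφc_cont.sub hgd.continuous).aestronglyMeasurable
  have hlow x := le_conj_sub_conj (t := t x) hφ (hφd x) (hφc _) hg hgd hsmooth (hgc x) (hinv x)
  have hup x := conj_sub_conj_add_sq_le (t := t x) hB hφ (hφd x) (hφc _) hsc hg hgd hsmooth
    (hgc x) hlip (hinv x) (hinv' _)
  have hGi : Integrable (fun x => φc (gradient φ x) - g (gradient φ x)) μ :=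
    integrable_of_le_of_le (hG.comp_measurable (measurable_gradient φ)) (ae_of_all _ hlow)
      (ae_of_all _ fun x => le_sub_iff_add_le.2 (hup x))
      ((hT.sub hφi).sub (hQ.const_mul _)) (((hT.sub hφi).add (hR.const_mul _)).sub (hQ.const_mul _))
  refine ⟨(integrable_map_measure hG (measurable_gradient φ).aemeasurable).2 hGi, ?_⟩
  have h := integral_mono ((hGi.add (hQ.const_mul (β / 2))).sub (hR.const_mul (B / (2 * β ^ 2))))
    (hT.sub hφi) fun x => sub_le_iff_le_add.2 (hup x)
  rw [integral_sub' (hGi.add (hQ.const_mul _)) (hR.const_mul _), integral_add' hGi (hQ.const_mul _),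
    integral_sub' hT hφi, integral_const_mul, integral_const_mul] at h
  rwa [integral_map (measurable_gradient φ).aemeasurable hG]

end Integral

section Penalty

theorem integral_le_mul_integral_max_zero {α : Type*} [MeasurableSpace α] {μ ν : Measure α}
    {τ : ℝ} (hτ : 0 ≤ τ) (hdom : ∀ s, MeasurableSet s → μ s ≤ ENNReal.ofReal τ * ν s)
    {f : α → ℝ} (hf : Integrable (fun y => max (f y) 0) ν) :
    ∫ y, f y ∂μ ≤ τ * ∫ y, max (f y) 0 ∂ν := by
  have hle : μ ≤ ENNReal.ofReal τ • ν := Measure.le_iff.2 fun s hs => by simpa using hdom s hs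
  calc ∫ y, f y ∂μ ≤ ∫ y, max (f y) 0 ∂μ := by
        by_cases hfμ : Integrable f μ
        · exact integral_mono hfμ hfμ.pos_part fun y => le_max_left _ _
        · rw [integral_undef hfμ]
          exact integral_nonneg fun y => le_max_right _ _
    _ ≤ ∫ y, max (f y) 0 ∂(ENNReal.ofReal τ • ν) :=
        integral_mono_measure hle (ae_of_all _ fun y => le_max_right _ _)
          (hf.smul_measure ENNReal.ofReal_ne_top)
    _ = τ * ∫ y, max (f y) 0 ∂ν := by
        rw [integral_smul_measure, ENNReal.toReal_ofReal hτ, smul_eq_mul]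

variable {E : Type*} [NormedAddCommGroup E] [MeasurableSpace E]

theorem neg_mul_integral_max_zero_le_sum_mul_integral {ι : Type*} [Fintype ι] {α : ι → ℝ}
    {φc g : ι → E → ℝ} {μ ν : Measure E} {τ : ℝ}
    (hcong : ∀ y, ∑ n, α n * φc n y = ‖y‖ ^ 2 / 2)
    (hint : ∀ n, Integrable (fun y => φc n y - g n y) μ) (hτ : 0 ≤ τ)
    (hdom : ∀ s, MeasurableSet s → μ s ≤ ENNReal.ofReal τ * ν s)
    (hmax : Integrable (fun y => max (∑ n, α n * g n y - ‖y‖ ^ 2 / 2) 0) ν) :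
    -(τ * ∫ y, max (∑ n, α n * g n y - ‖y‖ ^ 2 / 2) 0 ∂ν)
      ≤ ∑ n, α n * ∫ y, φc n y - g n y ∂μ := by
  have hsum : ∑ n, α n * ∫ y, φc n y - g n y ∂μ = -∫ y, ∑ n, α n * g n y - ‖y‖ ^ 2 / 2 ∂μ := by
    simp_rw [← integral_const_mul, ← integral_neg]
    rw [← integral_finsetSum _ fun n _ => (hint n).const_mul _]
    congr 1 with y
    simp only [mul_sub, Finset.sum_sub_distrib, hcong, neg_sub]
  rw [hsum, neg_le_neg_iff]
  exact integral_le_mul_integral_max_zero hτ hdom hmax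

end Penalty

theorem theorem2_key_inequality_general {D N : ℕ}
    (P : Fin N → Measure (EuclideanSpace ℝ (Fin D)))
    (Pbar : Measure (EuclideanSpace ℝ (Fin D)))
    (α : Fin N → ℝ) (hα : ∀ n, 0 < α n)
    -- optimal congruent potentials ψₙ* with conjugates ψ̄ₙ*
    (ψs ψbs : Fin N → EuclideanSpace ℝ (Fin D) → ℝ)
    (hψs_conv : ∀ n, ConvexOn ℝ Set.univ (ψs n))
    (hψs_diff : ∀ n, Differentiable ℝ (ψs n))
    (hψbs_diff : ∀ n, Differentiable ℝ (ψbs n))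
    (hψbs_conj : ∀ n y, IsLUB (Set.range fun x => ⟪x, y⟫ - ψs n x) (ψbs n y))
    (hpush : ∀ n, (P n).map (gradient (ψs n)) = Pbar)
    (hcong : ∀ y, ∑ n, α n * ψbs n y = ‖y‖ ^ 2 / 2)
    -- candidate potentials ψₙ† and ψ̄ₙ‡ with conjugates ψₙ‡
    (β B : ℝ) (hβ : 0 < β) (hβB : β ≤ B)
    (ψdag ψbd ψd : Fin N → EuclideanSpace ℝ (Fin D) → ℝ)
    (hψbd_conv : ∀ n, ConvexOn ℝ Set.univ (ψbd n))
    (hψbd_diff : ∀ n, Differentiable ℝ (ψbd n))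
    (hψbd_sconv : ∀ n, ConvexOn ℝ Set.univ (fun y => ψbd n y - β / 2 * ‖y‖ ^ 2))
    (hψbd_smooth : ∀ n x y, ‖gradient (ψbd n) x - gradient (ψbd n) y‖ ≤ B * ‖x - y‖)
    (hψd_conj : ∀ n x, IsLUB (Set.range fun y => ⟪y, x⟫ - ψbd n y) (ψd n x))
    (hψd_lip : ∀ n x y, ‖gradient (ψd n) x - gradient (ψd n) y‖ ≤ (1 / β) * ‖x - y‖)
    (hinv1 : ∀ n x, gradient (ψbd n) (gradient (ψd n) x) = x)
    (hinv2 : ∀ n y, gradient (ψd n) (gradient (ψbd n) y) = y)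
    -- regularization parameters
    (lam : ℝ) (hlam : lam > B / (2 * β ^ 2))
    (τ : ℝ) (hτ : 1 ≤ τ)
    (Phat : Measure (EuclideanSpace ℝ (Fin D)))
    (hdom : ∀ A : Set (EuclideanSpace ℝ (Fin D)), MeasurableSet A →
      Pbar A ≤ ENNReal.ofReal τ * Phat A)
    -- integrability of the stated integrals
    (hintM1 : ∀ n, Integrable
      (fun x => ⟪x, gradient (ψdag n) x⟫ - ψbd n (gradient (ψdag n) x)) (P n))
    (hintM2 : Integrable (fun y => max (∑ n, α n * ψbd n y - ‖y‖ ^ 2 / 2) 0) Phat)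
    (hintM3 : ∀ n, Integrable
      (fun x => ‖gradient (ψbd n) (gradient (ψdag n) x) - x‖ ^ 2) (P n))
    (hint_s : ∀ n, Integrable (ψs n) (P n))
    -- the regularized objective
    (M : ℝ)
    (hM : M = (∑ n, α n * ∫ x, (⟪x, gradient (ψdag n) x⟫
          - ψbd n (gradient (ψdag n) x)) ∂(P n))
      + τ * ∫ y, max (∑ n, α n * ψbd n y - ‖y‖ ^ 2 / 2) 0 ∂Phat
      + lam * ∑ n, α n * ∫ x, ‖gradient (ψbd n) (gradient (ψdag n) x) - x‖ ^ 2 ∂(P n))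
    (hint_sd : ∀ n, Integrable
      (fun x => ‖gradient (ψs n) x - gradient (ψd n) x‖ ^ 2) (P n))
    (Δ : ℝ) (hΔ : Δ = M - ∑ n, α n * ∫ x, ψs n x ∂(P n)) :
    Δ ≥ (∑ n, α n * (lam - B / (2 * β ^ 2)) *
          ∫ x, ‖gradient (ψbd n) (gradient (ψdag n) x) - x‖ ^ 2 ∂(P n))
        + β / 2 * ∑ n, α n * ∫ x, ‖gradient (ψs n) x - gradient (ψd n) x‖ ^ 2 ∂(P n) ∧
      Δ ≥ 0 := by
  have key n := integrable_map_and_integral_map_conj_sub_conj_le (P n) (gradient (ψdag n))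
    (hβ.le.trans hβB) (hψs_conv n) (hψs_diff n) (hψbs_conj n) (hψbs_diff n).continuous
    (strongConvexOn_iff_convex.2 (hψbd_sconv n)) (hψbd_conv n) (hψbd_diff n) (hψbd_smooth n)
    (hψd_conj n) (hψd_lip n) (hinv1 n) (hinv2 n) (hintM1 n) (hintM3 n) (hint_s n) (hint_sd n)
  simp only [hpush] at key
  have hpen := neg_mul_integral_max_zero_le_sum_mul_integral hcong (fun n => (key n).1)
    (zero_le_one.trans hτ) hdom hintM2
  refine ⟨?bound, (add_nonneg ?_ ?_).trans ?bound⟩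
  case bound =>
    suffices h : (∑ n, α n * (lam - B / (2 * β ^ 2)) *
          ∫ x, ‖gradient (ψbd n) (gradient (ψdag n) x) - x‖ ^ 2 ∂(P n))
        + β / 2 * (∑ n, α n * ∫ x, ‖gradient (ψs n) x - gradient (ψd n) x‖ ^ 2 ∂(P n))
        + ∑ n, α n * ∫ y, ψbs n y - ψbd n y ∂Pbar
        ≤ (∑ n, α n * ∫ x, (⟪x, gradient (ψdag n) x⟫ - ψbd n (gradient (ψdag n) x)) ∂(P n))
        + lam * (∑ n, α n * ∫ x, ‖gradient (ψbd n) (gradient (ψdag n) x) - x‖ ^ 2 ∂(P n))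
        - ∑ n, α n * ∫ x, ψs n x ∂(P n) by rw [hΔ, hM]; linarith
    simp only [Finset.mul_sum, ← Finset.sum_add_distrib, ← Finset.sum_sub_distrib]
    refine Finset.sum_le_sum fun n _ => ?_
    have := mul_le_mul_of_nonneg_left (key n).2 (hα n).le
    linarith
  · exact Finset.sum_nonneg fun n _ => mul_nonneg (mul_nonneg (hα n).le (sub_nonneg.2 hlam.le))
      (integral_nonneg fun x => sq_nonneg _)
  · exact mul_nonneg (by positivity) (Finset.sum_nonneg fun n _ => mul_nonneg (hα n).le
      (integral_nonneg fun x => sq_nonneg _))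

/-- Key inequality (28)–(30) in the proof of Theorem 2: with
`Δ = M − Σₙ αₙ ∫ ψₙ* dPₙ`,
`Δ ≥ Σₙ αₙ(λ − B/(2β²)) ∫ ‖∇ψ̄ₙ‡(∇ψₙ†(x)) − x‖² dPₙ
   + (β/2) Σₙ αₙ ∫ ‖∇ψₙ*(x) − ∇ψₙ‡(x)‖² dPₙ`; in particular `Δ ≥ 0`. -/
theorem theorem2_key_inequality {D N : ℕ}
    (P : Fin N → Measure (EuclideanSpace ℝ (Fin D)))
    (Pbar : Measure (EuclideanSpace ℝ (Fin D)))
    [∀ n, IsProbabilityMeasure (P n)] [IsProbabilityMeasure Pbar]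
    (α : Fin N → ℝ) (hα : ∀ n, 0 < α n) (hαsum : ∑ n, α n = 1)
    -- optimal congruent potentials ψₙ* with conjugates ψ̄ₙ*
    (ψs ψbs : Fin N → EuclideanSpace ℝ (Fin D) → ℝ)
    (hψs_conv : ∀ n, ConvexOn ℝ Set.univ (ψs n))
    (hψs_diff : ∀ n, Differentiable ℝ (ψs n))
    (hψbs_diff : ∀ n, Differentiable ℝ (ψbs n))
    (hψbs_conj : ∀ n y, IsLUB (Set.range fun x => ⟪x, y⟫ - ψs n x) (ψbs n y))
    (hpush : ∀ n, (P n).map (gradient (ψs n)) = Pbar)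
    (hsinv : ∀ n x, gradient (ψbs n) (gradient (ψs n) x) = x)
    (hcong : ∀ y, ∑ n, α n * ψbs n y = ‖y‖ ^ 2 / 2)
    (hcongGrad : ∀ y, ∑ n, α n • gradient (ψbs n) y = y)
    -- candidate potentials ψₙ† and ψ̄ₙ‡ with conjugates ψₙ‡
    (β B : ℝ) (hβ : 0 < β) (hβB : β ≤ B)
    (ψdag ψbd ψd : Fin N → EuclideanSpace ℝ (Fin D) → ℝ)
    (hψdag_conv : ∀ n, ConvexOn ℝ Set.univ (ψdag n))
    (hψdag_diff : ∀ n, Differentiable ℝ (ψdag n))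
    (hψbd_conv : ∀ n, ConvexOn ℝ Set.univ (ψbd n))
    (hψbd_diff : ∀ n, Differentiable ℝ (ψbd n))
    (hψbd_sconv : ∀ n, ConvexOn ℝ Set.univ (fun y => ψbd n y - β / 2 * ‖y‖ ^ 2))
    (hψbd_smooth : ∀ n x y, ‖gradient (ψbd n) x - gradient (ψbd n) y‖ ≤ B * ‖x - y‖)
    (hψd_diff : ∀ n, Differentiable ℝ (ψd n))
    (hψd_conj : ∀ n x, IsLUB (Set.range fun y => ⟪y, x⟫ - ψbd n y) (ψd n x))
    (hψd_lip : ∀ n x y, ‖gradient (ψd n) x - gradient (ψd n) y‖ ≤ (1 / β) * ‖x - y‖)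
    (hinv1 : ∀ n x, gradient (ψbd n) (gradient (ψd n) x) = x)
    (hinv2 : ∀ n y, gradient (ψd n) (gradient (ψbd n) y) = y)
    -- regularization parameters
    (lam : ℝ) (hlam : lam > B / (2 * β ^ 2))
    (τ : ℝ) (hτ : 1 ≤ τ)
    (Phat : Measure (EuclideanSpace ℝ (Fin D))) [IsProbabilityMeasure Phat]
    (hdom : ∀ A : Set (EuclideanSpace ℝ (Fin D)), MeasurableSet A →
      Pbar A ≤ ENNReal.ofReal τ * Phat A)
    -- integrability of the stated integrals
    (hintM1 : ∀ n, Integrable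
      (fun x => ⟪x, gradient (ψdag n) x⟫ - ψbd n (gradient (ψdag n) x)) (P n))
    (hintM2 : Integrable (fun y => max (∑ n, α n * ψbd n y - ‖y‖ ^ 2 / 2) 0) Phat)
    (hintM3 : ∀ n, Integrable
      (fun x => ‖gradient (ψbd n) (gradient (ψdag n) x) - x‖ ^ 2) (P n))
    (hint_s : ∀ n, Integrable (ψs n) (P n))
    -- the regularized objective
    (M : ℝ)
    (hM : M = (∑ n, α n * ∫ x, (⟪x, gradient (ψdag n) x⟫
          - ψbd n (gradient (ψdag n) x)) ∂(P n))
      + τ * ∫ y, max (∑ n, α n * ψbd n y - ‖y‖ ^ 2 / 2) 0 ∂Phat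
      + lam * ∑ n, α n * ∫ x, ‖gradient (ψbd n) (gradient (ψdag n) x) - x‖ ^ 2 ∂(P n))
    (hint_sd : ∀ n, Integrable
      (fun x => ‖gradient (ψs n) x - gradient (ψd n) x‖ ^ 2) (P n))
    (Δ : ℝ) (hΔ : Δ = M - ∑ n, α n * ∫ x, ψs n x ∂(P n)) :
    Δ ≥ (∑ n, α n * (lam - B / (2 * β ^ 2)) *
          ∫ x, ‖gradient (ψbd n) (gradient (ψdag n) x) - x‖ ^ 2 ∂(P n))
        + β / 2 * ∑ n, α n * ∫ x, ‖gradient (ψs n) x - gradient (ψd n) x‖ ^ 2 ∂(P n) ∧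
      Δ ≥ 0 :=
  theorem2_key_inequality_general P Pbar α hα ψs ψbs hψs_conv hψs_diff hψbs_diff hψbs_conj hpush
    hcong β B hβ hβB ψdag ψbd ψd hψbd_conv hψbd_diff hψbd_sconv hψbd_smooth hψd_conj hψd_lip hinv1
    hinv2 lam hlam τ hτ Phat hdom hintM1 hintM2 hintM3 hint_s M hM hint_sd Δ hΔ
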